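/- The subgroup K has index 16 in Γ; the quotient Γ/K is isomorphic to the group presented by ⟨a, b, d | a² = b² = d² = (ab)² = (bd)² = (ad)⁴ = 1⟩ (via a ↦ aK, b ↦ bK, d ↦ dK); moreover Γ/K is the internal direct product of the subgroup ⟨bK⟩ of order 2 and the subgroup ⟨aK, dK⟩, which is a dihedral group of order 8. -/

import Mathlib

set_option maxHeartbeats 1000000

attribute [local instance] Classical.propDecidable

noncomputable section

namespace Grig

/-! ### The Grigorchuk group -/

/-- The action of the generator `a` on vertices (finite binary words). -/
def aFun : List Bool → List Bool
  | [] => []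
  | x :: w => (!x) :: w

lemma aFun_invol : ∀ w, aFun (aFun w) = w := by
  intro w; cases w <;> simp [aFun]

/-- States of the automaton generating `b`, `c`, `d`. -/
inductive St | B | C | D

/-- The actions of `b`, `c`, `d` on vertices. -/
def stFun : St → List Bool → List Bool
  | _, [] => []
  | .B, false :: w => false :: aFun w
  | .B, true :: w => true :: stFun .C w
  | .C, false :: w => false :: aFun w
  | .C, true :: w => true :: stFun .D w
  | .D, false :: w => false :: w
  | .D, true :: w => true :: stFun .B w

lemma stFun_invol : ∀ (s : St) (w : List Bool), stFun s (stFun s w) = w := by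
  intro s w
  induction w generalizing s with
  | nil => cases s <;> rfl
  | cons x w ih => cases s <;> cases x <;> simp [stFun, aFun_invol, ih]

/-- The automorphism `a` of the binary rooted tree. -/
def a : Equiv.Perm (List Bool) := ⟨aFun, aFun, aFun_invol, aFun_invol⟩
/-- The automorphism `b`. -/
def b : Equiv.Perm (List Bool) := ⟨stFun .B, stFun .B, stFun_invol .B, stFun_invol .B⟩
/-- The automorphism `c`. -/
def c : Equiv.Perm (List Bool) := ⟨stFun .C, stFun .C, stFun_invol .C, stFun_invol .C⟩
/-- The automorphism `d`. -/
def d : Equiv.Perm (List Bool) := ⟨stFun .D, stFun .D, stFun_invol .D, stFun_invol .D⟩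

/-- The Grigorchuk group `Γ`, as the subgroup of the group of permutations of the
vertex set generated by the four automorphisms `a, b, c, d` (which indeed preserve word
length and initial segments, so `Γ` is a subgroup of `Aut(T)`). -/
def Grigorchuk : Subgroup (Equiv.Perm (List Bool)) := Subgroup.closure {a, b, c, d}

/-- `a` as an element of `Γ`. -/
def ga : Grigorchuk := ⟨a, Subgroup.subset_closure (by simp)⟩
/-- `b` as an element of `Γ`. -/
def gb : Grigorchuk := ⟨b, Subgroup.subset_closure (by simp)⟩
/-- `c` as an element of `Γ`. -/
def gc : Grigorchuk := ⟨c, Subgroup.subset_closure (by simp)⟩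
/-- `d` as an element of `Γ`. -/
def gd : Grigorchuk := ⟨d, Subgroup.subset_closure (by simp)⟩

/-- The first level stabilizer `St_Γ(1)` of `Γ`. -/
def St1 : Subgroup Grigorchuk where
  carrier := {g | (g : Equiv.Perm (List Bool)) [false] = [false] ∧
                  (g : Equiv.Perm (List Bool)) [true] = [true]}
  one_mem' := ⟨rfl, rfl⟩
  mul_mem' := by
    rintro g h ⟨hg1, hg2⟩ ⟨hh1, hh2⟩
    refine ⟨?_, ?_⟩ <;>
      simp only [Subgroup.coe_mul, Equiv.Perm.mul_apply, hh1, hh2, hg1, hg2]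
  inv_mem' := by
    rintro g ⟨hg1, hg2⟩
    refine ⟨?_, ?_⟩
    · conv_lhs => rw [← hg1]
      simp
    · conv_lhs => rw [← hg2]
      simp

/-- The subgroup `K`, the normal closure of `abab` in `Γ`. -/
def K : Subgroup Grigorchuk := Subgroup.normalClosure {ga * gb * ga * gb}

instance : K.Normal := Subgroup.normalClosure_normal

/-- The canonical projection `π_K : Γ → Γ/K`. -/
def piK : Grigorchuk →* Grigorchuk ⧸ K := QuotientGroup.mk' K

/-- `ψ_i(g)` (`i ∈ {0,1}`, encoded by `false`/`true`): the automorphism determined by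
`g(i·w) = i·ψ_i(g)(w)`, when it exists in `Γ` (it does for `g ∈ St_Γ(1)`);
junk value `1` otherwise. -/
def psiG (i : Bool) (g : Grigorchuk) : Grigorchuk :=
  if h : ∃ k : Grigorchuk, ∀ w : List Bool,
      (g : Equiv.Perm (List Bool)) (i :: w) = i :: (k : Equiv.Perm (List Bool)) w
  then h.choose else 1

/-- `ū`: the closest element of `St_Γ(1)`. -/
def bar (g : Grigorchuk) : Grigorchuk := if g ∈ St1 then g else g * ga

/-- The word length of `g ∈ Γ` with respect to the generating set `{a,b,c,d}`
(each generator is an involution, so inverses of generators are not needed). -/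
def wlen (g : Grigorchuk) : ℕ :=
  sInf {n | ∃ l : List Grigorchuk, l.length = n ∧
    (∀ x ∈ l, x ∈ ({ga, gb, gc, gd} : Set Grigorchuk)) ∧ l.prod = g}



/-! ### Words and equations over a group -/

/-- A letter: a constant from `G`, or a variable `x ∈ ℕ` with a sign
(`true` for `x`, `false` for `x⁻¹`). -/
abbrev Letter (G : Type*) := G ⊕ (ℕ × Bool)

/-- A word over `G` with variables: `W = u₁u₂⋯u_k`, `u_i ∈ G ∪ X^{±1}`. -/
abbrev Word (G : Type*) := List (Letter G)

variable {G : Type*} [Group G]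

/-- The constant letter. -/
def Cst (g : G) : Letter G := Sum.inl g
/-- The letter `x`. -/
def Vp {G : Type*} (x : ℕ) : Letter G := Sum.inr (x, true)
/-- The letter `x⁻¹`. -/
def Vm {G : Type*} (x : ℕ) : Letter G := Sum.inr (x, false)

/-- The element of the free product `G ∗ F_X` represented by a word. -/
def wordProd (W : Word G) : Monoid.Coprod G (FreeGroup ℕ) :=
  (W.map (fun u => match u with
    | Sum.inl g => Monoid.Coprod.inl g
    | Sum.inr (x, e) =>
        Monoid.Coprod.inr (if e then FreeGroup.of x else (FreeGroup.of x)⁻¹))).prod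

/-- Number of occurrences of the letter `x^ε` (`ε` given by `e`) in `W`. -/
def occ (W : Word G) (x : ℕ) (e : Bool) : ℕ :=
  W.countP (fun u => match u with
    | Sum.inr (y, f) => y == x && f == e
    | _ => false)

/-- Total number of occurrences of the variable `x` in `W` (occurrences of both
`x` and `x⁻¹` are counted). -/
def nocc (W : Word G) (x : ℕ) : ℕ := occ W x true + occ W x false

/-- `Var(W)`: the set of variables occurring in `W`. -/
def Vars (W : Word G) : Set ℕ := {x | nocc W x ≠ 0}

/-- A word is quadratic if every variable occurring in it occurs exactly twice. -/
def IsQuadratic (W : Word G) : Prop := ∀ x ∈ Vars W, nocc W x = 2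

/-- A word is orientable if every variable occurring in it occurs exactly once with
exponent `+1` and once with exponent `-1`. -/
def Orientable (W : Word G) : Prop := ∀ x ∈ Vars W, occ W x true = 1 ∧ occ W x false = 1

/-- Formal inverse of a word. -/
def wordInv (W : Word G) : Word G :=
  (W.map (fun u => match u with
    | Sum.inl g => Sum.inl g⁻¹
    | Sum.inr (x, e) => (Sum.inr (x, !e) : Letter G))).reverse

/-- The commutator word `[x,y] = x⁻¹y⁻¹xy`. -/
def comm {G : Type*} (x y : ℕ) : Word G := [Vm x, Vm y, Vp x, Vp y]
/-- The square word `x² = x·x`. -/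
def sq {G : Type*} (x : ℕ) : Word G := [Vp x, Vp x]
/-- The coefficient factor `z⁻¹cz`. -/
def cf (z : ℕ) (c : G) : Word G := [Vm z, Cst c, Vp z]

/-- Concatenation of a list of words. -/
def listJoin {α : Type*} (l : List (List α)) : List α := l.foldr (· ++ ·) []

/-- The commutator part `[x₁,y₁]⋯[x_g,y_g]`. -/
def commPart {G : Type*} (g : ℕ) (xs ys : Fin g → ℕ) : Word G :=
  listJoin (List.ofFn fun i => comm (xs i) (ys i))
/-- The square part `x₁²⋯x_g²`. -/
def sqPart {G : Type*} (g : ℕ) (xs : Fin g → ℕ) : Word G :=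
  listJoin (List.ofFn fun i => sq (xs i))
/-- The coefficient part `z₁⁻¹c₁z₁⋯z_m⁻¹c_mz_m`. -/
def coefPart (m : ℕ) (zs : Fin m → ℕ) (cs : Fin m → G) : Word G :=
  listJoin (List.ofFn fun i => cf (zs i) (cs i))

/-- The standard orientable quadratic word
`[x₁,y₁]⋯[x_g,y_g]·z₁⁻¹c₁z₁⋯z_m⁻¹c_mz_m`. -/
def stdOr (g m : ℕ) (xs ys : Fin g → ℕ) (zs : Fin m → ℕ) (cs : Fin m → G) : Word G :=
  commPart g xs ys ++ coefPart m zs cs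

/-- The standard non-orientable quadratic word
`x₁²⋯x_g²·z₁⁻¹c₁z₁⋯z_m⁻¹c_mz_m`. -/
def stdNonOr (g m : ℕ) (xs : Fin g → ℕ) (zs : Fin m → ℕ) (cs : Fin m → G) : Word G :=
  sqPart g xs ++ coefPart m zs cs

/-- The variables `x₁,…,x_g,y₁,…,y_g,z₁,…,z_m` are pairwise distinct. -/
def DistinctVars (g m : ℕ) (xs ys : Fin g → ℕ) (zs : Fin m → ℕ) : Prop :=
  Function.Injective (fun p : (Fin g ⊕ Fin g) ⊕ Fin m =>
    match p with
    | Sum.inl (Sum.inl i) => xs i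
    | Sum.inl (Sum.inr i) => ys i
    | Sum.inr i => zs i)

/-- The variables `x₁,…,x_g,z₁,…,z_m` are pairwise distinct. -/
def DistinctVarsN (g m : ℕ) (xs : Fin g → ℕ) (zs : Fin m → ℕ) : Prop :=
  Function.Injective (fun p : Fin g ⊕ Fin m =>
    match p with
    | Sum.inl i => xs i
    | Sum.inr i => zs i)

/-- `α : G ∗ F_X → G` is a `G`-homomorphism (identical on `G`). -/
def IsGHom (α : Monoid.Coprod G (FreeGroup ℕ) →* G) : Prop :=
  ∀ g : G, α (Monoid.Coprod.inl g) = g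

/-- The value of a homomorphism at a variable. -/
def xval (α : Monoid.Coprod G (FreeGroup ℕ) →* G) (x : ℕ) : G :=
  α (Monoid.Coprod.inr (FreeGroup.of x))

/-- The equation `W = 1` has a solution in `G`. -/
def Solvable (W : Word G) : Prop :=
  ∃ α : Monoid.Coprod G (FreeGroup ℕ) →* G, IsGHom α ∧ α (wordProd W) = 1

/-- The system of equations `{W = 1 | W ∈ Ws}` with constraint `γ` modulo `H`
has a solution in `G`. -/
def SolvableC (H : Subgroup G) [H.Normal] (Ws : List (Word G)) (γ : ℕ → G ⧸ H) : Prop :=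
  ∃ α : Monoid.Coprod G (FreeGroup ℕ) →* G, IsGHom α ∧
    (∀ W ∈ Ws, α (wordProd W) = 1) ∧
    ∀ x : ℕ, (∃ W ∈ Ws, x ∈ Vars W) → (QuotientGroup.mk' H) (xval α x) = γ x

/-- A finitely supported `G`-automorphism of `G ∗ F_X`. -/
def IsFinGAut (φ : Monoid.Coprod G (FreeGroup ℕ) ≃* Monoid.Coprod G (FreeGroup ℕ)) : Prop :=
  (∀ g : G, φ (Monoid.Coprod.inl g) = Monoid.Coprod.inl g) ∧
  {x : ℕ | φ (Monoid.Coprod.inr (FreeGroup.of x)) ≠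
      Monoid.Coprod.inr (FreeGroup.of x)}.Finite

/-- Two words are equivalent if some finitely supported `G`-automorphism sends (the
element of `G ∗ F_X` represented by) the first to a conjugate of the second. -/
def EquivWords (Wa Wb : Word G) : Prop :=
  ∃ φ : Monoid.Coprod G (FreeGroup ℕ) ≃* Monoid.Coprod G (FreeGroup ℕ),
    IsFinGAut φ ∧ IsConj (φ (wordProd Wa)) (wordProd Wb)

/-- The homomorphism `G ∗ F_X → G/H` extending a constraint `γ` (equal to `π_H` on `G`
and to `γ` on the variables). -/
def constraintHom (H : Subgroup G) [H.Normal] (γ : ℕ → G ⧸ H) :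
    Monoid.Coprod G (FreeGroup ℕ) →* G ⧸ H :=
  Monoid.Coprod.lift (QuotientGroup.mk' H) (FreeGroup.lift γ)

/-- Equivalence of constrained equations `(Wa = 1, γ)` and `(Wb = 1, ζ)`. -/
def EquivWordsC (H : Subgroup G) [H.Normal] (Wa : Word G) (γ : ℕ → G ⧸ H)
    (Wb : Word G) (ζ : ℕ → G ⧸ H) : Prop :=
  ∃ φ : Monoid.Coprod G (FreeGroup ℕ) ≃* Monoid.Coprod G (FreeGroup ℕ),
    IsFinGAut φ ∧ IsConj (φ (wordProd Wa)) (wordProd Wb) ∧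
    constraintHom H ζ = (constraintHom H γ).comp φ.toMonoidHom

/-- `W₁ #ₓ W₂`, for `W₁ = U₁ x^{ε₁} V₁` and `W₂ = U₂ x^{ε₂} V₂`:
the word `U₁ (V₂U₂)^{-ε₁ε₂} V₁`. -/
def joinAt (U₁ V₁ U₂ V₂ : Word G) (e₁ e₂ : Bool) : Word G :=
  U₁ ++ (if e₁ = e₂ then wordInv (V₂ ++ U₂) else V₂ ++ U₂) ++ V₁



/-! ### The splitting map `Ψ` for words over `Γ` -/

/-- The image `St_Γ(1)/K` in `Γ/K` (well defined since `K ⊆ St_Γ(1)`). -/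
def StQ : Subgroup (Grigorchuk ⧸ K) := St1.map (QuotientGroup.mk' K)

/-- The coset modulo `St_Γ(1)` of a letter, under the constraint `γ`
(`false` = trivial coset, `true` = nontrivial coset). -/
def letterBit (γ : ℕ → Grigorchuk ⧸ K) : Letter Grigorchuk → Bool
  | Sum.inl g => if g ∈ St1 then false else true
  | Sum.inr (x, _) => if γ x ∈ StQ then false else true

/-- `σ_γ(W)`: the coset modulo `St_Γ(1)` of a word, under the constraint `γ`
(`false` = trivial coset `1`). -/
def sigmaW (γ : ℕ → Grigorchuk ⧸ K) : Word Grigorchuk → Bool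
  | [] => false
  | u :: W => xor (letterBit γ u) (sigmaW γ W)

variable (d0 d1 : ℕ → ℕ)

/-- The descendant `x_j` of the variable `x` (given the two fixed injections). -/
def dsc (j : Bool) (x : ℕ) : ℕ := if j then d1 x else d0 x

/-- The letter of `Ψ_i(W)` replacing a letter of `W`, where `s` is the coset
`σ_γ(u₁⋯u_{i-1})` of the preceding prefix. -/
def psiLetter (γ : ℕ → Grigorchuk ⧸ K) (i : Bool) (s : Bool) :
    Letter Grigorchuk → Letter Grigorchuk
  | Sum.inl g => Sum.inl (if s then psiG i (ga * bar g * ga) else psiG i (bar g))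
  | Sum.inr (x, true) => Sum.inr (dsc d0 d1 (xor i s) x, true)
  | Sum.inr (x, false) =>
      Sum.inr (dsc d0 d1 (xor i (xor s (letterBit γ (Sum.inr (x, false))))) x, false)

/-- Auxiliary recursion for `Ψ_i`, carrying the coset of the processed prefix. -/
def psiGo (γ : ℕ → Grigorchuk ⧸ K) (i : Bool) : Bool → Word Grigorchuk → Word Grigorchuk
  | _, [] => []
  | s, u :: W => psiLetter d0 d1 γ i s u :: psiGo γ i (xor s (letterBit γ u)) W

/-- The splitting `Ψ_i(W)` of a word `W` with respect to the constraint `γ`. -/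
def PsiW (γ : ℕ → Grigorchuk ⧸ K) (i : Bool) (W : Word Grigorchuk) : Word Grigorchuk :=
  psiGo d0 d1 γ i false W

/-- `q̄` for `q ∈ Γ/K`: the closest element of `St_Γ(1)/K`. -/
def barQ (q : Grigorchuk ⧸ K) : Grigorchuk ⧸ K :=
  if q ∈ StQ then q else q * (QuotientGroup.mk' K ga)


end Grig

/-- The relator set of the presentation
`⟨a, b, d | a² = b² = d² = (ab)² = (bd)² = (ad)⁴ = 1⟩` (generators `0 ↦ a`, `1 ↦ b`,
`2 ↦ d`). -/
def Grig.grigRels : Set (FreeGroup (Fin 3)) :=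
  {(FreeGroup.of 0) ^ 2, (FreeGroup.of 1) ^ 2, (FreeGroup.of 2) ^ 2,
    (FreeGroup.of 0 * FreeGroup.of 1) ^ 2, (FreeGroup.of 1 * FreeGroup.of 2) ^ 2,
    (FreeGroup.of 0 * FreeGroup.of 2) ^ 4}


/-! In `Γ/K` the images of `a, b, d` satisfy the six defining relations: `abab ∈ K`, `bd = c` is
an involution, and `(ad)⁴ = 1` already holds in `Γ`. The relations make `b` central and `⟨a, d⟩`
dihedral, so every element of `Γ/K`, and of the presented group, has the form `b^i (ad)^j a^k`
with `i, k < 2` and `j < 4`. These 16 elements of `Γ/K` are distinct: `K` permutes the pairs of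
level-3 vertices in 12 orbits, `Γ` permutes those orbits, and the 16 normal forms act on them by
16 different permutations. Hence the presentation map is an isomorphism of groups of order 16.
Sending `a, d` to the two generating reflections of `D₄` and `b` to `1` maps `⟨a, d⟩`
isomorphically onto `D₄`, and `b ∉ ⟨a, d⟩` by uniqueness of normal forms. -/

section Involutions

variable {G H : Type*} [Group G] [Group H]

lemma pow_val_intCast_eq_zpow {x : G} {n : ℕ} [NeZero n] (h : x ^ n = 1) (i : ℤ) :
    x ^ (i : ZMod n).val = x ^ i := by
  rw [← zpow_natCast, ZMod.val_intCast, ← zpow_eq_zpow_emod' i h]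

lemma Commute.of_sq_eq_one {x y : G} (hx : x ^ 2 = 1) (hy : y ^ 2 = 1) (hxy : (x * y) ^ 2 = 1) :
    Commute x y := by
  rw [sq, ← eq_inv_iff_mul_eq_one] at hx hy hxy
  rw [Commute, SemiconjBy, hxy, mul_inv_rev, ← hx, ← hy]

lemma mul_zpow_mul_eq_zpow_neg_mul {s t : G} (hs : s ^ 2 = 1) (ht : t ^ 2 = 1) (j : ℤ) :
    s * (s * t) ^ j = (s * t) ^ (-j) * s := by
  have hsemi : SemiconjBy s (s * t) (s * t)⁻¹ := by
    rw [sq] at hs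
    rw [sq, ← eq_inv_iff_mul_eq_one] at ht
    calc s * (s * t) = t := by rw [← mul_assoc, hs, one_mul]
      _ = (s * t)⁻¹ * s := by rw [mul_inv_rev, inv_mul_cancel_right, ← ht]
  rw [(hsemi.zpow_right j).eq, inv_zpow']

lemma exists_zpow_mul_zpow_of_mem_closure_pair {s t g : G} (hs : s ^ 2 = 1) (ht : t ^ 2 = 1)
    (hg : g ∈ Subgroup.closure {s, t}) : ∃ j k : ℤ, g = (s * t) ^ j * s ^ k := by
  have reflect (j k : ℤ) : s * ((s * t) ^ j * s ^ k) = (s * t) ^ (-j) * s ^ (k + 1) := by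
    rw [← mul_assoc, mul_zpow_mul_eq_zpow_neg_mul hs ht, mul_assoc, ← zpow_one_add, add_comm]
  have step : ∀ x ∈ ({s, t} : Set G), ∀ y, (∃ j k : ℤ, y = (s * t) ^ j * s ^ k) →
      ∃ j k : ℤ, x * y = (s * t) ^ j * s ^ k := by
    rintro x hx y ⟨j, k, rfl⟩
    rcases hx with rfl | rfl
    · exact ⟨-j, k + 1, reflect j k⟩
    · refine ⟨-(1 + j), k + 1, ?_⟩
      have hts : x = s * (s * x) := by rw [← mul_assoc, ← sq, hs, one_mul]
      rw [← reflect, zpow_one_add, ← mul_assoc, ← mul_assoc, ← mul_assoc, ← hts, mul_assoc]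
  have inv_eq : ∀ x ∈ ({s, t} : Set G), x⁻¹ = x := by
    rintro x (rfl | rfl)
    · exact inv_eq_of_mul_eq_one_right (by rw [← sq, hs])
    · exact inv_eq_of_mul_eq_one_right (by rw [← sq, ht])
  induction hg using Subgroup.closure_induction_left with
  | one => exact ⟨0, 0, by simp⟩
  | mul_left x hx y _ ih => exact step x hx y ih
  | inv_mul_cancel x hx y _ ih => rw [inv_eq x hx]; exact step x hx y ih

lemma exists_zpow_mul_of_mem_closure_insert {z g : G} {S : Set G} (hz : ∀ x ∈ S, Commute z x)
    (hg : g ∈ Subgroup.closure (insert z S)) :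
    ∃ i : ℤ, ∃ w ∈ Subgroup.closure S, g = z ^ i * w := by
  induction hg using Subgroup.closure_induction_left with
  | one => exact ⟨0, 1, one_mem _, by simp⟩
  | mul_left x hx y _ ih =>
    obtain ⟨i, w, hw, rfl⟩ := ih
    rcases hx with rfl | hx
    · exact ⟨1 + i, w, hw, by rw [zpow_one_add, mul_assoc]⟩
    · refine ⟨i, x * w, mul_mem (Subgroup.subset_closure hx) hw, ?_⟩
      rw [← mul_assoc, ← ((hz x hx).zpow_left i).eq, mul_assoc]
  | inv_mul_cancel x hx y _ ih =>
    obtain ⟨i, w, hw, rfl⟩ := ih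
    rcases hx with rfl | hx
    · exact ⟨-1 + i, w, hw, by rw [zpow_add, zpow_neg_one, mul_assoc]⟩
    · refine ⟨i, x⁻¹ * w, mul_mem (inv_mem (Subgroup.subset_closure hx)) hw, ?_⟩
      rw [← mul_assoc, ← ((hz x hx).inv_right.zpow_left i).eq, mul_assoc]

lemma zpowers_inf_eq_bot_of_sq_eq_one {x : G} {H : Subgroup G} (hx : x ^ 2 = 1) (hxH : x ∉ H) :
    Subgroup.zpowers x ⊓ H = ⊥ := by
  rw [eq_bot_iff]
  intro y hy
  rw [Subgroup.mem_inf, Subgroup.mem_zpowers_iff] at hy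
  obtain ⟨⟨i, rfl⟩, hi⟩ := hy
  rw [zpow_eq_zpow_emod' i hx, Nat.cast_ofNat] at hi ⊢
  rcases Int.emod_two_eq i with h | h <;> rw [h] at hi ⊢
  · rw [zpow_zero]
    exact Subgroup.one_mem _
  · exact absurd (by simpa using hi) hxH

lemma commute_of_mem_zpowers_of_mem_closure {x y z : G} {S : Set G} (hS : ∀ s ∈ S, Commute x s)
    (hy : y ∈ Subgroup.zpowers x) (hz : z ∈ Subgroup.closure S) : Commute y z := by
  obtain ⟨i, rfl⟩ := hy
  have hz' : z ∈ Subgroup.centralizer {x} := (Subgroup.closure_le _).2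
    (fun s hs => Subgroup.mem_centralizer_singleton_iff.2 (hS s hs).eq.symm) hz
  have hzx : Commute z x := Subgroup.mem_centralizer_singleton_iff.1 hz'
  exact hzx.symm.zpow_left i

def dihedralWord (s t : G) {n : ℕ} (v : ZMod n × ZMod 2) : G := (s * t) ^ v.1.val * s ^ v.2.val

lemma dihedralWord_mem_closure (s t : G) {n : ℕ} (v : ZMod n × ZMod 2) :
    dihedralWord s t v ∈ Subgroup.closure {s, t} := by
  have hs : s ∈ Subgroup.closure {s, t} := Subgroup.subset_closure (Set.mem_insert s {t})
  have ht : t ∈ Subgroup.closure {s, t} := Subgroup.subset_closure (Set.mem_insert_of_mem s rfl)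
  exact mul_mem (pow_mem (mul_mem hs ht) _) (pow_mem hs _)

lemma closure_pair_subset_range_dihedralWord {s t : G} {n : ℕ} [NeZero n] (hs : s ^ 2 = 1)
    (ht : t ^ 2 = 1) (hst : (s * t) ^ n = 1) :
    (Subgroup.closure {s, t} : Set G) ⊆ Set.range (dihedralWord s t (n := n)) := by
  intro g hg
  obtain ⟨j, k, rfl⟩ := exists_zpow_mul_zpow_of_mem_closure_pair hs ht hg
  exact ⟨((j : ZMod n), (k : ZMod 2)), by
    rw [dihedralWord, pow_val_intCast_eq_zpow hst, pow_val_intCast_eq_zpow hs]⟩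

lemma map_dihedralWord (φ : G →* H) (s t : G) {n : ℕ} (v : ZMod n × ZMod 2) :
    φ (dihedralWord s t v) = dihedralWord (φ s) (φ t) v := by
  simp only [dihedralWord, map_mul, map_pow]

end Involutions

lemma PresentedGroup.lift_of_eq_one_of_mem {α : Type*} {rels : Set (FreeGroup α)}
    {r : FreeGroup α} (hr : r ∈ rels) :
    FreeGroup.lift (PresentedGroup.of (rels := rels)) r = 1 := by
  rw [show FreeGroup.lift PresentedGroup.of = PresentedGroup.mk rels from
    FreeGroup.ext_hom _ _ fun _ => rfl]
  exact PresentedGroup.one_of_mem hr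

namespace MulAction

variable (G : Type*) {α β : Type*} [Group G] [MulAction G α] (q : α → β)

def descentSubgroup : Subgroup G where
  carrier := {g | ∃ τ : Equiv.Perm β, ∀ x, q (g • x) = τ (q x)}
  one_mem' := ⟨1, fun x => by simp⟩
  mul_mem' := by
    rintro g h ⟨τ, hτ⟩ ⟨υ, hυ⟩
    exact ⟨τ * υ, fun x => by rw [mul_smul, hτ, hυ, Equiv.Perm.mul_apply]⟩
  inv_mem' := by
    rintro g ⟨τ, hτ⟩
    exact ⟨τ⁻¹, fun x => by rw [Equiv.Perm.eq_inv_iff_eq, ← hτ, smul_inv_smul]⟩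

variable {G q}

lemma descent_unique (hq : Function.Surjective q) {g : G} {τ τ' : Equiv.Perm β}
    (h : ∀ x, q (g • x) = τ (q x)) (h' : ∀ x, q (g • x) = τ' (q x)) : τ = τ' :=
  Equiv.ext <| hq.forall.2 fun x => (h x).symm.trans (h' x)

def descentHom (hq : Function.Surjective q) : descentSubgroup G q →* Equiv.Perm β where
  toFun g := g.2.choose
  map_one' := descent_unique hq (1 : descentSubgroup G q).2.choose_spec (fun x => by simp)
  map_mul' g h := descent_unique hq (g * h).2.choose_spec fun x => by
    rw [Subgroup.coe_mul, mul_smul, g.2.choose_spec, h.2.choose_spec, Equiv.Perm.mul_apply]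

lemma descentHom_eq (hq : Function.Surjective q) {g : descentSubgroup G q} {τ : Equiv.Perm β}
    (h : ∀ x, q ((g : G) • x) = τ (q x)) : descentHom hq g = τ :=
  descent_unique hq g.2.choose_spec h

end MulAction

namespace Grig

open Equiv

section GrigRels

variable {G H : Type*} [Group G] [Group H]

lemma forall_grigRels_lift_eq_one_iff (f : Fin 3 → G) :
    (∀ r ∈ grigRels, FreeGroup.lift f r = 1) ↔ f 0 ^ 2 = 1 ∧ f 1 ^ 2 = 1 ∧ f 2 ^ 2 = 1 ∧
      (f 0 * f 1) ^ 2 = 1 ∧ (f 1 * f 2) ^ 2 = 1 ∧ (f 0 * f 2) ^ 4 = 1 := by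
  simp [grigRels]

/-- `b^i (ad)^j a^k`, where `f = ![a, b, d]`. -/
def grigWord (f : Fin 3 → G) (v : ZMod 2 × ZMod 4 × ZMod 2) : G :=
  f 1 ^ v.1.val * dihedralWord (f 0) (f 2) v.2

lemma map_grigWord (φ : G →* H) (f : Fin 3 → G) (v : ZMod 2 × ZMod 4 × ZMod 2) :
    φ (grigWord f v) = grigWord (φ ∘ f) v := by
  simp only [grigWord, map_mul, map_pow, map_dihedralWord, Function.comp_apply]

lemma commute_of_grigRels {f : Fin 3 → G} (hf : ∀ r ∈ grigRels, FreeGroup.lift f r = 1) :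
    ∀ x ∈ ({f 0, f 2} : Set G), Commute (f 1) x := by
  obtain ⟨h0, h1, h2, h01, h12, -⟩ := (forall_grigRels_lift_eq_one_iff f).1 hf
  rintro x (rfl | rfl)
  · exact (Commute.of_sq_eq_one h0 h1 h01).symm
  · exact Commute.of_sq_eq_one h1 h2 h12

lemma grigWord_surjective {f : Fin 3 → G} (hf : ∀ r ∈ grigRels, FreeGroup.lift f r = 1)
    (hgen : Subgroup.closure (Set.range f) = ⊤) : Function.Surjective (grigWord f) := by
  have hrange : Set.range f = {f 1, f 0, f 2} := by
    ext x
    simp [Fin.exists_fin_succ]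
    tauto
  obtain ⟨h0, h1, h2, -, -, h02⟩ := (forall_grigRels_lift_eq_one_iff f).1 hf
  intro g
  obtain ⟨i, w, hw, rfl⟩ := exists_zpow_mul_of_mem_closure_insert (commute_of_grigRels hf)
    (hrange ▸ hgen ▸ Subgroup.mem_top g)
  obtain ⟨v, rfl⟩ := closure_pair_subset_range_dihedralWord h0 h2 h02 hw
  exact ⟨((i : ZMod 2), v), by rw [grigWord, pow_val_intCast_eq_zpow h1]⟩

end GrigRels

lemma aFun_length (w : List Bool) : (aFun w).length = w.length := by
  cases w <;> rfl

lemma stFun_length (s : St) (w : List Bool) : (stFun s w).length = w.length := by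
  induction w generalizing s with
  | nil => cases s <;> rfl
  | cons x w ih => cases s <;> cases x <;> simp [stFun, aFun_length, ih]

-- `bd = c` alone does not survive the induction: its step needs `cb = d`, which needs `dc = b`.
lemma stFun_comp_stFun (w : List Bool) : stFun .B (stFun .D w) = stFun .C w ∧
    stFun .C (stFun .B w) = stFun .D w ∧ stFun .D (stFun .C w) = stFun .B w := by
  induction w with
  | nil => exact ⟨rfl, rfl, rfl⟩
  | cons x w ih => cases x <;> simp [stFun, aFun_invol, ih]

lemma ga_sq : ga ^ 2 = 1 := Subtype.ext <| Equiv.ext aFun_invol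
lemma gb_sq : gb ^ 2 = 1 := Subtype.ext <| Equiv.ext <| stFun_invol .B
lemma gc_sq : gc ^ 2 = 1 := Subtype.ext <| Equiv.ext <| stFun_invol .C
lemma gd_sq : gd ^ 2 = 1 := Subtype.ext <| Equiv.ext <| stFun_invol .D

lemma gb_mul_gd : gb * gd = gc := Subtype.ext <| Equiv.ext fun w => (stFun_comp_stFun w).1

lemma ga_mul_gd_pow_four : (ga * gd) ^ 4 = 1 := by
  refine Subtype.ext <| Equiv.ext fun w => ?_
  rcases w with _ | ⟨_ | _, w⟩ <;> simp [pow_succ, ga, gd, a, d, aFun, stFun, stFun_invol]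

lemma closure_ga_gb_gc_gd : Subgroup.closure ({ga, gb, gc, gd} : Set Grigorchuk) = ⊤ := by
  have h : ((↑) : Grigorchuk → Perm (List Bool)) ⁻¹' {a, b, c, d} = {ga, gb, gc, gd} := by
    ext g
    simp only [Set.mem_preimage, Set.mem_insert_iff, Set.mem_singleton_iff, Subtype.ext_iff]
    rfl
  rw [← h]
  exact Subgroup.closure_closure_coe_preimage

local notation "π_K" => QuotientGroup.mk' K

lemma mk_ga_sq : π_K ga ^ 2 = 1 := by rw [← map_pow, ga_sq, map_one]
lemma mk_gb_sq : π_K gb ^ 2 = 1 := by rw [← map_pow, gb_sq, map_one]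
lemma mk_gd_sq : π_K gd ^ 2 = 1 := by rw [← map_pow, gd_sq, map_one]

lemma mk_ga_mul_mk_gb_sq : (π_K ga * π_K gb) ^ 2 = 1 := by
  rw [← map_mul, ← map_pow, QuotientGroup.mk'_apply, QuotientGroup.eq_one_iff, pow_two,
    ← mul_assoc]
  exact Subgroup.subset_normalClosure rfl

lemma mk_gb_mul_mk_gd_sq : (π_K gb * π_K gd) ^ 2 = 1 := by
  rw [← map_mul, gb_mul_gd, ← map_pow, gc_sq, map_one]

lemma mk_ga_mul_mk_gd_pow_four : (π_K ga * π_K gd) ^ 4 = 1 := by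
  rw [← map_mul, ← map_pow, ga_mul_gd_pow_four, map_one]

def genK : Fin 3 → Grigorchuk ⧸ K := ![π_K ga, π_K gb, π_K gd]

lemma genK_rels : ∀ r ∈ grigRels, FreeGroup.lift genK r = 1 :=
  (forall_grigRels_lift_eq_one_iff genK).2 ⟨mk_ga_sq, mk_gb_sq, mk_gd_sq, mk_ga_mul_mk_gb_sq,
    mk_gb_mul_mk_gd_sq, mk_ga_mul_mk_gd_pow_four⟩

lemma closure_range_genK : Subgroup.closure (Set.range genK) = ⊤ := by
  have mem : ∀ i, genK i ∈ Subgroup.closure (Set.range genK) := fun i =>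
    Subgroup.subset_closure (Set.mem_range_self i)
  rw [eq_top_iff, ← Subgroup.map_top_of_surjective _ (QuotientGroup.mk'_surjective K),
    ← closure_ga_gb_gc_gd, MonoidHom.map_closure, Subgroup.closure_le]
  rintro _ ⟨g, hg, rfl⟩
  rcases hg with rfl | rfl | rfl | rfl
  · exact mem 0
  · exact mem 1
  · rw [← gb_mul_gd, map_mul]
    exact mul_mem (mem 1) (mem 2)
  · exact mem 2

def QA : Perm (Fin 13) := swap 0 8 * swap 1 9 * swap 2 10 * swap 3 11 * swap 4 6 * swap 5 7
def QC : Perm (Fin 13) := swap 2 3 * swap 4 5 * swap 6 7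
def QD : Perm (Fin 13) := swap 10 11
def QB : Perm (Fin 13) := QC * QD

/- The 64 pairs `(u, v)` of level-3 vertices fall into 12 orbits under `K`; `orbitTable` lists
the orbit of `(u, v)` at position `8 u + v` (reading `u, v` in binary), and `pairOrbit` sends every
other pair to the junk value `12`. As `K` is normal, `a, b, c, d` permute these orbits, namely by
`QA, QB, QC, QD`. -/
def orbitTable : List (Fin 13) :=
  [0, 1, 2, 3, 4, 4, 5, 5,  1, 0, 3, 2, 4, 4, 5, 5,  3, 2, 0, 1, 5, 5, 4, 4,
   2, 3, 1, 0, 5, 5, 4, 4,  6, 6, 7, 7, 8, 9, 10, 11,  6, 6, 7, 7, 9, 8, 11, 10,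
   7, 7, 6, 6, 11, 10, 8, 9,  7, 7, 6, 6, 10, 11, 9, 8]

def binVal (w : List Bool) : ℕ := w.foldl (fun n x => 2 * n + x.toNat) 0

def pairOrbit (p : List Bool × List Bool) : Fin 13 :=
  bif p.1.length == 3 && p.2.length == 3 then orbitTable.getD (8 * binVal p.1 + binVal p.2) 12
  else 12

lemma pairOrbit_surjective : Function.Surjective pairOrbit := by
  have h : ∀ y : Fin 13, y = 12 ∨
      ∃ x₁ x₂ x₃ y₁ y₂ y₃ : Bool, pairOrbit ([x₁, x₂, x₃], [y₁, y₂, y₃]) = y := by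
    decide
  intro y
  rcases h y with rfl | ⟨x₁, x₂, x₃, y₁, y₂, y₃, hy⟩
  · exact ⟨([], []), rfl⟩
  · exact ⟨_, hy⟩

lemma pairOrbit_eq_of_length {u v : List Bool} (h : ¬(u.length = 3 ∧ v.length = 3)) :
    pairOrbit (u, v) = 12 := by
  rw [pairOrbit, show (u.length == 3 && v.length == 3) = false by simpa using h]
  rfl

lemma pairOrbit_map {f : List Bool → List Bool} {τ : Perm (Fin 13)}
    (hf : ∀ w, (f w).length = w.length) (hτ : τ 12 = 12)
    (h : ∀ x₁ x₂ x₃ y₁ y₂ y₃ : Bool,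
      pairOrbit (f [x₁, x₂, x₃], f [y₁, y₂, y₃]) = τ (pairOrbit ([x₁, x₂, x₃], [y₁, y₂, y₃])))
    (p : List Bool × List Bool) : pairOrbit (f p.1, f p.2) = τ (pairOrbit p) := by
  obtain ⟨u, v⟩ := p
  by_cases hlen : u.length = 3 ∧ v.length = 3
  · obtain ⟨x₁, x₂, x₃, rfl⟩ := List.length_eq_three.mp hlen.1
    obtain ⟨y₁, y₂, y₃, rfl⟩ := List.length_eq_three.mp hlen.2
    exact h x₁ x₂ x₃ y₁ y₂ y₃
  · rw [pairOrbit_eq_of_length hlen, pairOrbit_eq_of_length (by rwa [hf, hf]), hτ]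

lemma pairOrbit_a (p : List Bool × List Bool) :
    pairOrbit (aFun p.1, aFun p.2) = QA (pairOrbit p) :=
  pairOrbit_map aFun_length rfl (by decide) p

lemma pairOrbit_b (p : List Bool × List Bool) :
    pairOrbit (stFun .B p.1, stFun .B p.2) = QB (pairOrbit p) :=
  pairOrbit_map (stFun_length .B) rfl (by decide) p

lemma pairOrbit_c (p : List Bool × List Bool) :
    pairOrbit (stFun .C p.1, stFun .C p.2) = QC (pairOrbit p) :=
  pairOrbit_map (stFun_length .C) rfl (by decide) p

lemma pairOrbit_d (p : List Bool × List Bool) :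
    pairOrbit (stFun .D p.1, stFun .D p.2) = QD (pairOrbit p) :=
  pairOrbit_map (stFun_length .D) rfl (by decide) p

lemma le_descentSubgroup_pairOrbit :
    Grigorchuk ≤ MulAction.descentSubgroup (Perm (List Bool)) pairOrbit := by
  rw [Grigorchuk, Subgroup.closure_le]
  rintro _ (rfl | rfl | rfl | rfl)
  exacts [⟨QA, pairOrbit_a⟩, ⟨QB, pairOrbit_b⟩, ⟨QC, pairOrbit_c⟩, ⟨QD, pairOrbit_d⟩]

def rho : Grigorchuk →* Perm (Fin 13) :=
  (MulAction.descentHom pairOrbit_surjective).comp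
    (Subgroup.inclusion le_descentSubgroup_pairOrbit)

lemma rho_eq {g : Grigorchuk} {τ : Perm (Fin 13)}
    (h : ∀ p : List Bool × List Bool, pairOrbit ((g : Perm (List Bool)) • p) = τ (pairOrbit p)) :
    rho g = τ :=
  MulAction.descentHom_eq pairOrbit_surjective h

lemma rho_ga : rho ga = QA := rho_eq pairOrbit_a
lemma rho_gb : rho gb = QB := rho_eq pairOrbit_b
lemma rho_gd : rho gd = QD := rho_eq pairOrbit_d

lemma K_le_ker_rho : K ≤ rho.ker := by
  refine Subgroup.normalClosure_le_normal (Set.singleton_subset_iff.2 ?_)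
  change rho (ga * gb * ga * gb) = 1
  rw [map_mul, map_mul, map_mul, rho_ga, rho_gb]
  decide

def rhoK : Grigorchuk ⧸ K →* Perm (Fin 13) := QuotientGroup.lift K rho K_le_ker_rho

set_option maxRecDepth 100000 in
lemma grigWord_genK_injective : Function.Injective (grigWord genK) := by
  have hgen : rhoK ∘ genK = ![QA, QB, QD] := by
    funext i
    fin_cases i <;> simp [genK, rhoK, rho_ga, rho_gb, rho_gd]
  have hinj : Function.Injective (grigWord ![QA, QB, QD]) := by decide
  refine Function.Injective.of_comp (f := rhoK) ?_
  convert hinj using 1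
  funext v
  rw [Function.comp_apply, map_grigWord, hgen]

lemma grigWord_genK_bijective : Function.Bijective (grigWord genK) :=
  ⟨grigWord_genK_injective, grigWord_surjective genK_rels closure_range_genK⟩

def theta : PresentedGroup grigRels →* Grigorchuk ⧸ K := PresentedGroup.toGroup genK_rels

lemma theta_comp_grigWord : theta ∘ grigWord PresentedGroup.of = grigWord genK := by
  funext v
  rw [Function.comp_apply, map_grigWord]
  congr 1
  funext i
  exact PresentedGroup.toGroup.of genK_rels

lemma theta_bijective : Function.Bijective theta := by
  have hsurj : Function.Surjective (grigWord (PresentedGroup.of (rels := grigRels))) :=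
    grigWord_surjective (fun _ => PresentedGroup.lift_of_eq_one_of_mem)
      (PresentedGroup.closure_range_of _)
  have hcomp := theta_comp_grigWord ▸ grigWord_genK_bijective
  exact (Function.Bijective.of_comp_iff theta ⟨hcomp.1.of_comp, hsurj⟩).1 hcomp

def quotientEquiv : PresentedGroup grigRels ≃* Grigorchuk ⧸ K :=
  MulEquiv.ofBijective theta theta_bijective

lemma quotientEquiv_of (i : Fin 3) : quotientEquiv (PresentedGroup.of i) = genK i :=
  PresentedGroup.toGroup.of genK_rels

def toDihedral : PresentedGroup grigRels →* DihedralGroup 4 :=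
  PresentedGroup.toGroup (f := ![.sr 0, 1, .sr 1])
    ((forall_grigRels_lift_eq_one_iff _).2 (by decide))

def dihedralQuotient : Grigorchuk ⧸ K →* DihedralGroup 4 :=
  toDihedral.comp quotientEquiv.symm.toMonoidHom

lemma dihedralQuotient_genK (i : Fin 3) :
    dihedralQuotient (genK i) = ![.sr 0, 1, .sr 1] i := by
  rw [dihedralQuotient, MonoidHom.comp_apply, MulEquiv.coe_toMonoidHom, ← quotientEquiv_of,
    MulEquiv.symm_apply_apply]
  exact PresentedGroup.toGroup.of _

lemma dihedralQuotient_domRestrict_bijective :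
    Function.Bijective (dihedralQuotient.domRestrict (Subgroup.closure {π_K ga, π_K gd})) := by
  let w (v : ZMod 4 × ZMod 2) : Subgroup.closure {π_K ga, π_K gd} :=
    ⟨dihedralWord (π_K ga) (π_K gd) v, dihedralWord_mem_closure _ _ v⟩
  have hw : Function.Surjective w := by
    rintro ⟨g, hg⟩
    obtain ⟨v, rfl⟩ := closure_pair_subset_range_dihedralWord mk_ga_sq mk_gd_sq
      mk_ga_mul_mk_gd_pow_four hg
    exact ⟨v, rfl⟩
  have hcomp :
      dihedralQuotient.domRestrict _ ∘ w = dihedralWord (.sr 0 : DihedralGroup 4) (.sr 1) := by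
    funext v
    exact (map_dihedralWord dihedralQuotient _ _ v).trans
      (by rw [show π_K ga = genK 0 from rfl, show π_K gd = genK 2 from rfl,
        dihedralQuotient_genK, dihedralQuotient_genK]; rfl)
  have hbij : Function.Bijective (dihedralWord (n := 4) (.sr 0 : DihedralGroup 4) (.sr 1)) := by
    decide
  rw [← hcomp] at hbij
  exact (Function.Bijective.of_comp_iff _ ⟨hbij.1.of_comp, hw⟩).1 hbij

lemma mk_gb_not_mem_closure : π_K gb ∉ Subgroup.closure {π_K ga, π_K gd} := by
  intro h
  obtain ⟨v, hv⟩ := closure_pair_subset_range_dihedralWord mk_ga_sq mk_gd_sq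
    mk_ga_mul_mk_gd_pow_four h
  have hb : grigWord genK (1, 0) = π_K gb := by
    simp [grigWord, dihedralWord, show (1 : ZMod 2).val = 1 from rfl, genK]
  have hv' : grigWord genK (0, v) = π_K gb := by
    simpa [grigWord, genK] using hv
  exact zero_ne_one (congrArg Prod.fst (grigWord_genK_injective (hv'.trans hb.symm)))

lemma orderOf_mk_gb : orderOf (π_K gb) = 2 :=
  orderOf_eq_prime mk_gb_sq fun h => mk_gb_not_mem_closure (h ▸ one_mem _)

lemma zpowers_mk_gb_sup_closure :
    Subgroup.zpowers (π_K gb) ⊔ Subgroup.closure {π_K ga, π_K gd} = ⊤ := by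
  rw [eq_top_iff, ← closure_range_genK, Subgroup.closure_le]
  rintro _ ⟨i, rfl⟩
  fin_cases i
  · exact Subgroup.mem_sup_right (Subgroup.subset_closure (Set.mem_insert _ _))
  · exact Subgroup.mem_sup_left (Subgroup.mem_zpowers _)
  · exact Subgroup.mem_sup_right (Subgroup.subset_closure (Set.mem_insert_of_mem _ rfl))

end Grig

/-- **Lemma 2.1.** `K` has index `16` in `Γ`; the quotient `Γ/K` has the presentation
`⟨a, b, d | a² = b² = d² = (ab)² = (bd)² = (ad)⁴ = 1⟩` (via `a ↦ aK`, `b ↦ bK`,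
`d ↦ dK`); and `Γ/K` is the internal direct product of the subgroup `⟨bK⟩` of order `2`
and the subgroup `⟨aK, dK⟩`, which is a dihedral group of order `8`. -/
theorem Grig.K_index_and_quotient :
    K.index = 16 ∧
    (∃ e : PresentedGroup grigRels ≃* Grigorchuk ⧸ K,
      e (PresentedGroup.of 0) = (QuotientGroup.mk' K) ga ∧
      e (PresentedGroup.of 1) = (QuotientGroup.mk' K) gb ∧
      e (PresentedGroup.of 2) = (QuotientGroup.mk' K) gd) ∧
    (Nat.card (Subgroup.zpowers ((QuotientGroup.mk' K) gb)) = 2 ∧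
     Nat.card (Subgroup.closure {(QuotientGroup.mk' K) ga, (QuotientGroup.mk' K) gd}) = 8 ∧
     Nonempty ((Subgroup.closure {(QuotientGroup.mk' K) ga, (QuotientGroup.mk' K) gd}) ≃*
        DihedralGroup 4) ∧
     Subgroup.zpowers ((QuotientGroup.mk' K) gb) ⊔
        Subgroup.closure {(QuotientGroup.mk' K) ga, (QuotientGroup.mk' K) gd} = ⊤ ∧
     Subgroup.zpowers ((QuotientGroup.mk' K) gb) ⊓
        Subgroup.closure {(QuotientGroup.mk' K) ga, (QuotientGroup.mk' K) gd} = ⊥ ∧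
     ∀ x ∈ Subgroup.zpowers ((QuotientGroup.mk' K) gb),
       ∀ y ∈ Subgroup.closure {(QuotientGroup.mk' K) ga, (QuotientGroup.mk' K) gd},
         Commute x y) := by
  let e := MulEquiv.ofBijective _ dihedralQuotient_domRestrict_bijective
  refine ⟨?_, ⟨quotientEquiv, quotientEquiv_of 0, quotientEquiv_of 1, quotientEquiv_of 2⟩,
    by rw [Nat.card_zpowers, orderOf_mk_gb], ?_, ⟨e⟩, zpowers_mk_gb_sup_closure,
    zpowers_inf_eq_bot_of_sq_eq_one mk_gb_sq mk_gb_not_mem_closure,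
    fun x hx y hy => commute_of_mem_zpowers_of_mem_closure (commute_of_grigRels genK_rels) hx hy⟩
  · rw [Subgroup.index, ← Nat.card_congr (Equiv.ofBijective _ grigWord_genK_bijective)]
    simp
  · rw [Nat.card_congr e.toEquiv, DihedralGroup.nat_card]
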